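/- arXiv:2401.00194 — 3 statements merged into one kernel-verified Lean document; each statement's English description precedes it below -/
import Mathlib

section
/- Suppose N is odd and let a be the smallest divisor of N other than 1 (i.e., the least prime factor of N). Then the samples of the PBL signal are uniquely identifiable up to an integer constant vector from the modulo samples if and only if N·(a−1)/(2a) ≥ P+1. -/
/-!
The difference of two PBL sample vectors is again one, so identifiability says: an integer
vector `k` whose DFT is supported on the band `|p| ≤ P` is constant. The polynomial
`K = ∑ k n X ^ n` has rational coefficients, so its zeros among the `N`-th roots of unity
`ω ^ j` depend only on `gcd j N`; and since the DFT coefficient at `p` is `K (ω ^ (-p)) / N`,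
`K` vanishes at `ω ^ (-m)` for every `m` off the band modulo `N`. For `p ≠ 0` in the band,
`d = gcd p N` is a proper divisor of `N` and `m = (N - d) / 2` has `gcd m N = d`; it is off
the band as soon as `N - d > 2P`. The largest proper divisor is `N / a`, and `N - N / a > 2P`
is the stated inequality. When it fails, with `a = 2h + 1` and `r = N / a`, the vector
`a · [a ∣ n] = ∑_{|j| ≤ h} exp (2πi n j r / N)` is an integer PBL sample vector that is not
constant.
-/

def IsPBLSample (P N : ℕ) (y : Fin N → ℝ) : Prop :=
  ∃ c : ℤ → ℂ, (∀ p : ℤ, c (-p) = (starRingEnd ℂ) (c p)) ∧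
    ∀ n : Fin N, (y n : ℂ) =
      ∑ p ∈ Finset.Icc (-(P : ℤ)) (P : ℤ),
        c p * Complex.exp (2 * Real.pi * Complex.I * (n : ℕ) * p / N)

def PBLIdentifiable (P N : ℕ) : Prop :=
  ∀ y y' : Fin N → ℝ, IsPBLSample P N y → IsPBLSample P N y' →
    (∀ n : Fin N, ∃ k : ℤ, y n - y' n = k) →
    ∃ c : ℤ, ∀ n : Fin N, y n - y' n = c

open Finset Polynomial Complex Real

section RootsOfUnity

variable {K : Type*} [Field K] {N : ℕ} {ω : K}

theorem IsPrimitiveRoot.zpow_div_gcd {M : Type*} [DivisionCommMonoid M] {ζ : M}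
    (hN : 0 < N) (hζ : IsPrimitiveRoot ζ N) (m : ℤ) :
    IsPrimitiveRoot (ζ ^ m) (N / m.gcd N) := by
  set d := m.gcd N
  have hd : 0 < d := Int.gcd_pos_of_ne_zero_right m (by exact_mod_cast hN.ne')
  have hdN : d ∣ N := by simpa using Int.gcd_dvd_natAbs_right m N
  have hpow : IsPrimitiveRoot (ζ ^ d) (N / d) := hζ.pow hN (Nat.mul_div_cancel' hdN).symm
  have hcop : (m / d).gcd ((N / d : ℕ) : ℤ) = 1 := by
    rw [Int.natCast_div]
    exact Int.gcd_div_gcd_div_gcd hd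
  have := hpow.zpow_of_gcd_eq_one (m / d) hcop
  rwa [← zpow_natCast, ← zpow_mul, Int.mul_ediv_cancel' (Int.gcd_dvd_left m N)] at this

theorem IsPrimitiveRoot.aeval_zpow_eq_zero_of_gcd_eq [CharZero K] (hN : 0 < N)
    (hω : IsPrimitiveRoot ω N) {f : ℚ[X]} {m m' : ℤ} (hgcd : m.gcd N = m'.gcd N)
    (hf : aeval (ω ^ m) f = 0) : aeval (ω ^ m') f = 0 := by
  have hq : 0 < N / m.gcd N :=
    Nat.div_pos (Nat.le_of_dvd hN (by simpa using Int.gcd_dvd_natAbs_right m N))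
      (Int.gcd_pos_of_ne_zero_right m (by exact_mod_cast hN.ne'))
  have hm := hω.zpow_div_gcd hN m
  have hm' := hω.zpow_div_gcd hN m'
  rw [← hgcd] at hm'
  refine aeval_eq_zero_of_dvd_aeval_eq_zero ?_ (minpoly.aeval ℚ (ω ^ m'))
  rw [← cyclotomic_eq_minpoly_rat hm' hq, cyclotomic_eq_minpoly_rat hm hq]
  exact minpoly.dvd ℚ _ hf

theorem sum_Icc_zpow_eq_zero {ξ : K} (h : ℕ) (hξ : ξ ^ (2 * h + 1) = 1) (hξ1 : ξ ≠ 1) :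
    ∑ j ∈ Icc (-(h : ℤ)) h, ξ ^ j = 0 := by
  have hξ0 : ξ ≠ 0 := by rintro rfl; simp at hξ
  have hshift : ∑ j ∈ Icc (-(h : ℤ)) h, ξ ^ j =
      ∑ i ∈ range (2 * h + 1), ξ ^ (-(h : ℤ)) * ξ ^ i := by
    refine sum_nbij' (fun j => (j + h).toNat) (fun i => (i : ℤ) - h) ?_ ?_ ?_ ?_ ?_ <;>
      intro x hx <;> simp only [mem_Icc, mem_range] at hx ⊢
    all_goals try omega
    rw [← zpow_natCast, ← zpow_add₀ hξ0]
    congr 1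
    omega
  rw [hshift, ← mul_sum, geom_sum_eq hξ1, hξ, sub_self, zero_div, mul_zero]

theorem IsPrimitiveRoot.sum_zpow_mul_eq_ite (hω : IsPrimitiveRoot ω N) (j : ℤ) :
    ∑ n : Fin N, ω ^ (j * n) = if (N : ℤ) ∣ j then (N : K) else 0 := by
  have hN : (ω ^ j) ^ N = 1 := by
    rw [← zpow_natCast, ← zpow_mul, mul_comm, zpow_mul, zpow_natCast, hω.pow_eq_one, one_zpow]
  simp_rw [zpow_mul, zpow_natCast]
  rw [Fin.sum_univ_eq_sum_range (fun n => (ω ^ j) ^ n)]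
  split_ifs with hj
  · simp [(hω.zpow_eq_one_iff_dvd j).mpr hj]
  · rw [geom_sum_eq (mt (hω.zpow_eq_one_iff_dvd j).mp hj), hN, sub_self, zero_div]

end RootsOfUnity

section Bandlimited

variable {K : Type*} [Field K] [CharZero K] {N : ℕ} {ω : K}

noncomputable def samplePoly (k : Fin N → ℤ) : ℚ[X] :=
  ∑ n : Fin N, C (k n : ℚ) * X ^ (n : ℕ)

theorem aeval_samplePoly (k : Fin N → ℤ) (μ : K) :
    aeval μ (samplePoly k) = ∑ n : Fin N, (k n : K) * μ ^ (n : ℕ) := by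
  simp [samplePoly]

theorem IsPrimitiveRoot.aeval_samplePoly_zpow_neg (hN : N ≠ 0) (hω : IsPrimitiveRoot ω N)
    {k : Fin N → ℤ} {W : Finset ℤ} {b : ℤ → K}
    (hk : ∀ n : Fin N, (k n : K) = ∑ p ∈ W, b p * ω ^ ((n : ℤ) * p)) {m : ℤ}
    (hW : ∀ p ∈ W, |p - m| < N) :
    aeval (ω ^ (-m)) (samplePoly k) = N * if m ∈ W then b m else 0 := by
  have hω0 : ω ≠ 0 := hω.ne_zero hN
  calc aeval (ω ^ (-m)) (samplePoly k)
      = ∑ n : Fin N, ∑ p ∈ W, b p * ω ^ ((p - m) * n) := by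
        simp_rw [aeval_samplePoly, hk, sum_mul]
        refine sum_congr rfl fun n _ => sum_congr rfl fun p _ => ?_
        rw [mul_assoc, ← zpow_natCast, ← zpow_mul, ← zpow_add₀ hω0]
        ring_nf
    _ = ∑ p ∈ W, b p * if p = m then (N : K) else 0 := by
        rw [sum_comm]
        refine sum_congr rfl fun p hp => ?_
        have hdvd : (N : ℤ) ∣ p - m ↔ p = m := by
          refine ⟨fun h => sub_eq_zero.mp (Int.eq_zero_of_dvd_of_natAbs_lt_natAbs h ?_),
            fun h => by simp [h]⟩
          have := hW p hp
          zify
          simpa using this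
        rw [← mul_sum, hω.sum_zpow_mul_eq_ite]
        simp only [hdvd]
    _ = N * if m ∈ W then b m else 0 := by
        simp [mul_comm]

end Bandlimited

theorem Odd.exists_gcd_eq_of_dvd {N d : ℕ} (hN : Odd N) (hd : d ∣ N) :
    ∃ m : ℕ, m.gcd N = d ∧ 2 * m + d = N := by
  obtain ⟨q, rfl⟩ := hd
  obtain ⟨u, rfl⟩ := (Nat.odd_mul.mp hN).2
  refine ⟨d * u, ?_, by ring⟩
  rw [Nat.gcd_mul_left, show 2 * u + 1 = u * 2 + 1 by ring]
  simp

section IntegerBandlimited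

variable {N P : ℕ} {ω : ℂ} {k : Fin N → ℤ} {b : ℤ → ℂ}

theorem IsPrimitiveRoot.coeff_eq_zero_of_intValued (hω : IsPrimitiveRoot ω N) (hN : 1 < N)
    (hodd : Odd N) (hdiv : ∀ d, d ∣ N → d < N → 2 * P + d < N)
    (hk : ∀ n : Fin N, (k n : ℂ) = ∑ p ∈ Icc (-(P : ℤ)) P, b p * ω ^ ((n : ℤ) * p))
    {p : ℤ} (hp : p ∈ Icc (-(P : ℤ)) P) (hp0 : p ≠ 0) : b p = 0 := by
  have hPN : 2 * P + 1 < N := hdiv 1 (one_dvd N) hN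
  rw [mem_Icc] at hp
  set d := p.gcd N
  have hdN : d ∣ N := by simpa using Int.gcd_dvd_natAbs_right p N
  have hdP : d ≤ P := (Int.gcd_le_natAbs_left N hp0).trans (by omega)
  obtain ⟨m, hmd, hmN⟩ := hodd.exists_gcd_eq_of_dvd hdN
  have hPm : P < m := by have := hdiv d hdN (by omega); omega
  have hband (m' : ℤ) (h₁ : P < m' + N) (h₂ : m' + P < N) :
      ∀ p' ∈ Icc (-(P : ℤ)) P, |p' - m'| < N := fun p' hp' => by
    rw [mem_Icc] at hp'
    rw [abs_lt]
    constructor <;> omega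
  have hm : aeval (ω ^ (-(m : ℤ))) (samplePoly k) = 0 := by
    rw [hω.aeval_samplePoly_zpow_neg (by omega) hk (hband m (by omega) (by omega)),
      if_neg (by rw [mem_Icc]; omega), mul_zero]
  have hgcd : (-(m : ℤ)).gcd N = (-p).gcd N := by
    rw [Int.neg_gcd, Int.neg_gcd, Int.gcd_natCast_natCast, hmd]
  have hp' := hω.aeval_zpow_eq_zero_of_gcd_eq (by omega) hgcd hm
  rw [hω.aeval_samplePoly_zpow_neg (by omega) hk (hband p (by omega) (by omega)),
    if_pos (mem_Icc.mpr hp)] at hp'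
  exact (mul_eq_zero.mp hp').resolve_left (by exact_mod_cast (by omega : N ≠ 0))

theorem IsPrimitiveRoot.exists_eq_const_of_intValued (hω : IsPrimitiveRoot ω N) (hN : 1 < N)
    (hodd : Odd N) (hdiv : ∀ d, d ∣ N → d < N → 2 * P + d < N)
    (hk : ∀ n : Fin N, (k n : ℂ) = ∑ p ∈ Icc (-(P : ℤ)) P, b p * ω ^ ((n : ℤ) * p)) :
    ∃ c : ℤ, ∀ n, k n = c := by
  have hconst (n : Fin N) : (k n : ℂ) = b 0 := by
    rw [hk n, sum_eq_single 0 (fun p hp hp0 => by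
      rw [hω.coeff_eq_zero_of_intValued hN hodd hdiv hk hp hp0, zero_mul]) (by simp)]
    simp
  exact ⟨k ⟨0, by omega⟩, fun n => by exact_mod_cast (hconst n).trans (hconst _).symm⟩

end IntegerBandlimited

theorem exp_two_pi_I_mul_div (N n : ℕ) (p : ℤ) :
    exp (2 * π * I * n * p / N) = exp (2 * π * I / N) ^ ((n : ℤ) * p) := by
  rw [← exp_int_mul]
  congr 1
  push_cast
  ring

section PBL

variable {P N : ℕ}

theorem IsPBLSample.sub {y y' : Fin N → ℝ} (hy : IsPBLSample P N y) (hy' : IsPBLSample P N y') :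
    IsPBLSample P N (y - y') := by
  obtain ⟨c, hc, hyc⟩ := hy
  obtain ⟨c', hc', hyc'⟩ := hy'
  refine ⟨c - c', fun p => by simp [hc, hc'], fun n => ?_⟩
  simp [hyc, hyc', sub_mul]

theorem isPBLSample_zero : IsPBLSample P N 0 :=
  ⟨0, by simp, by simp⟩

theorem pblIdentifiable_iff : PBLIdentifiable P N ↔ ∀ y, IsPBLSample P N y →
    (∀ n, ∃ k : ℤ, y n = k) → ∃ c : ℤ, ∀ n, y n = c := by
  constructor
  · intro h y hy hint
    simpa using h y 0 hy isPBLSample_zero (by simpa using hint)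
  · intro h y y' hy hy' hint
    exact h (y - y') (hy.sub hy') hint

theorem pblIdentifiable_of_forall_dvd (hN : 1 < N) (hodd : Odd N)
    (hdiv : ∀ d, d ∣ N → d < N → 2 * P + d < N) : PBLIdentifiable P N := by
  rw [pblIdentifiable_iff]
  rintro y ⟨c, -, hyc⟩ hint
  choose k hk using hint
  have hkc (n : Fin N) : (k n : ℂ) =
      ∑ p ∈ Icc (-(P : ℤ)) P, c p * exp (2 * π * I / N) ^ ((n : ℤ) * p) := by
    have hn := hyc n
    rw [hk n] at hn
    simpa [exp_two_pi_I_mul_div] using hn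
  obtain ⟨c₀, hc₀⟩ :=
    (isPrimitiveRoot_exp N (by omega)).exists_eq_const_of_intValued hN hodd hdiv hkc
  exact ⟨c₀, fun n => by rw [hk, hc₀]⟩

theorem isPBLSample_indicator_dvd {h r : ℕ} (hr : 0 < r) (hNr : N = (2 * h + 1) * r)
    (hP : h * r ≤ P) :
    IsPBLSample P N fun n => if 2 * h + 1 ∣ (n : ℕ) then ((2 * h + 1 : ℕ) : ℝ) else 0 := by
  set ω := exp (2 * π * I / N)
  have hω : IsPrimitiveRoot ω N := isPrimitiveRoot_exp N (by rw [hNr]; positivity)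
  have hr' : (r : ℤ) ≠ 0 := by exact_mod_cast hr.ne'
  set S : Finset ℤ := (Icc (-(h : ℤ)) h).map ⟨(· * (r : ℤ)), mul_left_injective₀ hr'⟩
  have hS (p : ℤ) : -p ∈ S ↔ p ∈ S := by
    simp only [S, mem_map, mem_Icc, Function.Embedding.coeFn_mk]
    constructor <;> rintro ⟨j, hj, hjp⟩ <;> exact ⟨-j, by omega, by linarith⟩
  have hSW : S ⊆ Icc (-(P : ℤ)) P := by
    simp only [S, subset_iff, mem_map, mem_Icc, Function.Embedding.coeFn_mk]
    rintro _ ⟨j, hj, rfl⟩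
    have : (h : ℤ) * r ≤ P := by exact_mod_cast hP
    constructor <;> nlinarith
  refine ⟨fun p => if p ∈ S then 1 else 0, fun p => by simp [hS], fun n => ?_⟩
  simp_rw [ite_mul, one_mul, zero_mul, sum_ite_mem, inter_eq_right.mpr hSW, S, sum_map,
    Function.Embedding.coeFn_mk, exp_two_pi_I_mul_div]
  have hξ (j : ℤ) : ω ^ ((n : ℤ) * (j * r)) = (ω ^ ((n : ℕ) * r)) ^ j := by
    rw [← zpow_natCast, ← zpow_mul]
    push_cast
    ring_nf
  have hξN : (ω ^ ((n : ℕ) * r)) ^ (2 * h + 1) = 1 := by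
    have hexp : (n : ℕ) * r * (2 * h + 1) = N * n := by
      rw [mul_assoc, mul_comm r, ← hNr, mul_comm]
    rw [← pow_mul, hexp, pow_mul, hω.pow_eq_one, one_pow]
  have hξ1 : ω ^ ((n : ℕ) * r) = 1 ↔ 2 * h + 1 ∣ n := by
    have hdvd (m : ℕ) : N ∣ m * r ↔ 2 * h + 1 ∣ m := by
      rw [hNr]
      exact Nat.mul_dvd_mul_iff_right hr
    rw [hω.pow_eq_one_iff_dvd, hdvd]
  change _ = ∑ j ∈ Icc (-(h : ℤ)) h, ω ^ ((n : ℤ) * (j * r))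
  simp_rw [hξ]
  split_ifs with hdvd
  · have hcard : ((h : ℤ) + 1 + h).toNat = 2 * h + 1 := by omega
    simp [hξ1.mpr hdvd, hcard]
  · rw [sum_Icc_zpow_eq_zero h hξN (mt hξ1.mp hdvd)]
    simp

theorem not_pblIdentifiable_of_mul_le {h r : ℕ} (hh : 0 < h) (hr : 0 < r)
    (hNr : N = (2 * h + 1) * r) (hP : h * r ≤ P) : ¬ PBLIdentifiable P N := by
  have hN : 1 < N := by rw [hNr]; nlinarith
  rw [pblIdentifiable_iff]
  intro hid
  obtain ⟨c, hc⟩ := hid _ (isPBLSample_indicator_dvd hr hNr hP) fun n => by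
    split_ifs
    exacts [⟨2 * h + 1, by push_cast; rfl⟩, ⟨0, by simp⟩]
  have h0 := hc ⟨0, by omega⟩
  have h1 := hc ⟨1, hN⟩
  have hndvd : ¬ 2 * h + 1 ∣ 1 := fun hd => by have := Nat.le_of_dvd one_pos hd; omega
  simp only [dvd_zero, if_true, hndvd, if_false] at h0 h1
  have : ((2 * h + 1 : ℕ) : ℝ) = 0 := h0.trans h1.symm
  exact absurd this (by positivity)

end PBL

theorem Nat.mul_minFac_le_of_dvd {N d : ℕ} (hd : d ∣ N) (hdN : d < N) : d * N.minFac ≤ N := by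
  obtain ⟨q, rfl⟩ := hd
  have hq : 2 ≤ q := by
    rcases q with _ | _ | q
    · simp at hdN
    · simp at hdN
    · omega
  exact Nat.mul_le_mul_left d (Nat.minFac_le_of_dvd hq (dvd_mul_left q d))

theorem stmt16_general (P N a : ℕ) (hN : 2 * P + 1 < N) (hodd : Odd N)
    (ha : a = N.minFac) :
    PBLIdentifiable P N ↔
      (P : ℝ) + 1 ≤ (N : ℝ) * ((a : ℝ) - 1) / (2 * (a : ℝ)) := by
  have haN : a ∣ N := ha ▸ N.minFac_dvd
  obtain ⟨h, rfl⟩ := hodd.of_dvd_nat haN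
  obtain ⟨r, rfl⟩ := haN
  have hh : 0 < h := by
    have := (Nat.minFac_prime (by omega : (2 * h + 1) * r ≠ 1)).two_le
    rw [← ha] at this
    omega
  have hr : 0 < r := Nat.pos_of_ne_zero (by rintro rfl; simp at hN)
  have hbound : ((((2 * h + 1) * r : ℕ) : ℝ) * (((2 * h + 1 : ℕ) : ℝ) - 1) /
      (2 * ((2 * h + 1 : ℕ) : ℝ))) = ((h * r : ℕ) : ℝ) := by
    push_cast
    field_simp
    ring
  rw [hbound]
  norm_cast
  constructor
  · intro hid
    by_contra! hlt
    exact not_pblIdentifiable_of_mul_le hh hr rfl (by omega) hid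
  · intro hle
    refine pblIdentifiable_of_forall_dvd (by omega) hodd fun d hd hdN => ?_
    have hdr : d ≤ r := by
      have := Nat.mul_minFac_le_of_dvd hd hdN
      rw [← ha, mul_comm] at this
      exact Nat.le_of_mul_le_mul_left this (by omega)
    nlinarith

/-- for odd N with least prime factor a, the PBL samples are identifiable
up to an integer constant vector iff N·(a−1)/(2a) ≥ P+1. -/
theorem stmt16 (P N a : ℕ) (hP : 1 ≤ P) (hN : 2 * P + 1 < N) (hodd : Odd N)
    (ha : a = N.minFac) :
    PBLIdentifiable P N ↔
      (P : ℝ) + 1 ≤ (N : ℝ) * ((a : ℝ) - 1) / (2 * (a : ℝ)) :=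
  stmt16_general P N a hN hodd ha
end

section
/- If N ≥ 6·(P+1) (equivalently, the oversampling factor γ = N/(2P) satisfies γ ≥ 3·(1 + 1/P)), then the samples of the PBL signal are uniquely identifiable up to an integer constant vector from the modulo samples. -/
/-!
The difference `d = y - y'` is a character sum `∑ₚ aₚ ωₚⁿ` on `ZMod N`, `ωₚ = exp (2πip/N)`, and
takes integer values. Its `K`-th forward difference `∑ₚ aₚ (ωₚ - 1)ᴷ ωₚⁿ` is still integer valued
and, since `|ωₚ - 1| = 2|sin (πp/N)| < 1` when `6|p| < N`, tends to `0`; so it vanishes for large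
`K`. On a finite group a function with constant difference `c` has `N • c = 0`, hence `c = 0`;
descending from `K` this gives `Δd = 0`, i.e. `d` is constant.
-/

open fwdDiff Finset Function

section FwdDiff

variable {G V : Type*} [AddCommMonoid G] [AddCommGroup V] {h : G} {f : G → V}

lemma apply_add_nsmul_of_fwdDiff_eq_zero (hf : Δ_[h] f = 0) (x : G) (k : ℕ) :
    f (x + k • h) = f x := by
  induction k with
  | zero => simp
  | succ k ih =>
    rw [succ_nsmul, ← add_assoc, ← ih]
    exact sub_eq_zero.mp (congrFun hf (x + k • h))

lemma fwdDiff_eq_zero_of_fwdDiff_fwdDiff_eq_zero [IsAddTorsionFree V] {n : ℕ} (hn : n ≠ 0)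
    (hnh : n • h = 0) (hf : Δ_[h] (Δ_[h] f) = 0) : Δ_[h] f = 0 := by
  funext x
  have htelescope : ∑ k ∈ range n, Δ_[h] f (x + k • h) = f (x + n • h) - f x := by
    simpa [fwdDiff, succ_nsmul, add_assoc] using sum_range_sub (fun k => f (x + k • h)) n
  simp only [apply_add_nsmul_of_fwdDiff_eq_zero hf, sum_const, card_range, hnh, add_zero,
    sub_self] at htelescope
  exact (nsmul_eq_zero_iff_right hn).mp htelescope

lemma fwdDiff_eq_zero_of_fwdDiff_iter_eq_zero [IsAddTorsionFree V] {n : ℕ} (hn : n ≠ 0)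
    (hnh : n • h = 0) {K : ℕ} (hf : (Δ_[h])^[K] f = 0) : Δ_[h] f = 0 := by
  have hK : (Δ_[h])^[K + 1] f = 0 := by
    rw [iterate_succ_apply', hf]
    exact fwdDiff_const h 0
  clear hf
  induction K with
  | zero => exact hK
  | succ K ih =>
    rw [iterate_succ_apply', iterate_succ_apply'] at hK
    apply ih
    rw [iterate_succ_apply']
    exact fwdDiff_eq_zero_of_fwdDiff_fwdDiff_eq_zero hn hnh hK

lemma fwdDiff_iter_apply_mem (S : AddSubgroup V) (hf : ∀ x, f x ∈ S) (K : ℕ) (x : G) :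
    (Δ_[h])^[K] f x ∈ S := by
  induction K generalizing x with
  | zero => exact hf x
  | succ K ih =>
    rw [iterate_succ_apply']
    exact S.sub_mem (ih _) (ih x)

end FwdDiff

section CharacterSum

variable {G ι : Type*} [AddCommGroup G] (s : Finset ι) (a : ι → ℂ) (ψ : ι → AddChar G ℂ)

lemma fwdDiff_iter_sum_mul_addChar (h : G) (K : ℕ) :
    (Δ_[h])^[K] (fun x => ∑ i ∈ s, a i * ψ i x) =
      fun x => ∑ i ∈ s, a i * (ψ i h - 1) ^ K * ψ i x := by
  have hsum : (fun x => ∑ i ∈ s, a i * ψ i x) = ∑ i ∈ s, a i • ⇑(ψ i) := by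
    ext; simp
  ext x
  simp [hsum, fwdDiff_addChar_eq, mul_assoc]

lemma norm_fwdDiff_iter_sum_mul_addChar_le [Finite G] (h : G) (K : ℕ) (x : G) :
    ‖(Δ_[h])^[K] (fun x => ∑ i ∈ s, a i * ψ i x) x‖ ≤ ∑ i ∈ s, ‖a i‖ * ‖ψ i h - 1‖ ^ K := by
  rw [fwdDiff_iter_sum_mul_addChar]
  refine (norm_sum_le _ _).trans (sum_le_sum fun i _ => ?_)
  simp

variable [Finite G] {h : G}

lemma exists_fwdDiff_iter_sum_mul_addChar_eq_zero (hψ : ∀ i ∈ s, ‖ψ i h - 1‖ < 1)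
    (hint : ∀ x, ∑ i ∈ s, a i * ψ i x ∈ (Int.castAddHom ℂ).range) :
    ∃ K, (Δ_[h])^[K] (fun x => ∑ i ∈ s, a i * ψ i x) = 0 := by
  have hdecay : Filter.Tendsto (fun K : ℕ => ∑ i ∈ s, ‖a i‖ * ‖ψ i h - 1‖ ^ K)
      Filter.atTop (nhds 0) := by
    simpa using tendsto_finsetSum s fun i hi =>
      (tendsto_pow_atTop_nhds_zero_of_lt_one (norm_nonneg _) (hψ i hi)).const_mul ‖a i‖
  obtain ⟨K, hK⟩ := (hdecay.eventually (gt_mem_nhds zero_lt_one)).exists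
  refine ⟨K, funext fun x => ?_⟩
  obtain ⟨z, hz⟩ := fwdDiff_iter_apply_mem _ hint K x
  have hlt := (norm_fwdDiff_iter_sum_mul_addChar_le s a ψ h K x).trans_lt hK
  rw [← hz, Int.coe_castAddHom, Complex.norm_intCast] at hlt
  have hz0 : z = 0 := Int.abs_lt_one_iff.mp (by exact_mod_cast hlt)
  rw [← hz, hz0, map_zero, Pi.zero_apply]

lemma fwdDiff_sum_mul_addChar_eq_zero (hψ : ∀ i ∈ s, ‖ψ i h - 1‖ < 1)
    (hint : ∀ x, ∑ i ∈ s, a i * ψ i x ∈ (Int.castAddHom ℂ).range) : Δ_[h] (fun x => ∑ i ∈ s, a i * ψ i x) = 0 :=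
  have ⟨_, hK⟩ := exists_fwdDiff_iter_sum_mul_addChar_eq_zero s a ψ hψ hint
  fwdDiff_eq_zero_of_fwdDiff_iter_eq_zero Nat.card_pos.ne' card_nsmul_eq_zero' hK

end CharacterSum

lemma ZMod.stdAddChar_mulShift_natCast {N : ℕ} [NeZero N] (p : ℤ) (n : ℕ) :
    ZMod.stdAddChar.mulShift (p : ZMod N) n = Complex.exp (2 * Real.pi * Complex.I * n * p / N) := by
  rw [AddChar.mulShift_apply, show (p : ZMod N) * n = ((p * n : ℤ) : ZMod N) by push_cast; ring,
    ZMod.stdAddChar_coe]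
  push_cast
  ring_nf

lemma ZMod.norm_stdAddChar_sub_one_lt_one {N : ℕ} [NeZero N] {p : ℤ} (hp : 6 * |p| < N) :
    ‖ZMod.stdAddChar (p : ZMod N) - 1‖ < 1 := by
  have hN : (0 : ℝ) < N := by exact_mod_cast NeZero.pos N
  have hp' : 6 * |(p : ℝ)| < N := by exact_mod_cast hp
  set x : ℝ := 2 * Real.pi * p / N
  have hx : |x / 2| < Real.pi / 6 := by
    rw [show x / 2 = Real.pi * p / N by ring, abs_div, abs_mul, abs_of_pos Real.pi_pos,
      abs_of_pos hN, div_lt_div_iff₀ hN (by norm_num)]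
    nlinarith [Real.pi_pos]
  have hsin : |Real.sin (x / 2)| < 1 / 2 := by
    obtain ⟨hlow, hup⟩ := abs_lt.mp hx
    rw [← Real.sin_pi_div_six, abs_lt, ← Real.sin_neg]
    constructor <;> apply Real.sin_lt_sin_of_lt_of_le_pi_div_two <;> linarith [Real.pi_pos]
  rw [ZMod.stdAddChar_coe, show 2 * (Real.pi : ℂ) * Complex.I * p / N = Complex.I * x by
    simp only [x]; push_cast; ring, Complex.norm_exp_I_mul_ofReal_sub_one, Real.norm_eq_abs,
    abs_mul, abs_two]
  linarith

theorem stmt17_general (P N : ℕ) (h : 6 * (P + 1) ≤ N) :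
    PBLIdentifiable P N := by
  rintro y y' ⟨c, -, hc⟩ ⟨c', -, hc'⟩ hint
  choose k hk using hint
  have : NeZero N := ⟨by omega⟩
  let d : ZMod N → ℂ := fun x =>
    ∑ p ∈ Icc (-(P : ℤ)) P, (c p - c' p) * ZMod.stdAddChar.mulShift (p : ZMod N) x
  have hd : ∀ n : Fin N, d (n : ℕ) = ((y n - y' n : ℝ) : ℂ) := fun n => by
    simp only [d, ZMod.stdAddChar_mulShift_natCast, sub_mul, sum_sub_distrib, Complex.ofReal_sub,
      hc, hc']
  have hint : ∀ x, d x ∈ (Int.castAddHom ℂ).range := fun x =>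
    ⟨k ⟨x.val, ZMod.val_lt x⟩, by simpa [hk] using (hd ⟨x.val, ZMod.val_lt x⟩).symm⟩
  have hψ : ∀ p ∈ Icc (-(P : ℤ)) P, ‖ZMod.stdAddChar.mulShift (p : ZMod N) 1 - 1‖ < 1 := by
    intro p hp
    have := abs_le.mpr (mem_Icc.mp hp)
    rw [AddChar.mulShift_apply, mul_one]
    exact ZMod.norm_stdAddChar_sub_one_lt_one (by omega)
  have hconst : ∀ m : ℕ, d m = d 0 := fun m => by
    have := apply_add_nsmul_of_fwdDiff_eq_zero (fwdDiff_sum_mul_addChar_eq_zero _ _ _ hψ hint) 0 m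
    rwa [zero_add, nsmul_one] at this
  have hd0 := hd ⟨0, NeZero.pos N⟩
  rw [Fin.val_mk, Nat.cast_zero] at hd0
  refine ⟨k ⟨0, NeZero.pos N⟩, fun n => ?_⟩
  rw [← hk]
  exact_mod_cast (hd n).symm.trans ((hconst n).trans hd0)

/-- if N ≥ 6(P+1), the PBL samples are identifiable up to an integer
constant vector. -/
theorem stmt17 (P N : ℕ) (hP : 1 ≤ P) (hN : 2 * P + 1 < N) (h : 6 * (P + 1) ≤ N) :
    PBLIdentifiable P N :=
  stmt17_general P N h
end

section
/- Let f be a polynomial with integer coefficients of degree N. Then f(X) = A·(X^N − 1) for some nonzero rational number A if and only if for every positive divisor d of N, f has a complex root that is a root of the d-th cyclotomic polynomial Φ_d (equivalently, a primitive d-th root of unity). -/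
open Polynomial

/-- for an integer polynomial f of degree N, f = A·(X^N − 1) for some
nonzero rational A iff for every positive divisor d of N, f has a complex root that is
a root of the d-th cyclotomic polynomial. -/
theorem stmt19 (N : ℕ) (hN : 0 < N) (f : Polynomial ℤ) (hf : f.natDegree = N) :
    (∃ A : ℚ, A ≠ 0 ∧
        f.map (Int.castRingHom ℚ) = Polynomial.C A * (X ^ N - 1)) ↔
      ∀ d : ℕ, 0 < d → d ∣ N →
        ∃ x : ℂ, Polynomial.aeval x f = 0 ∧ (Polynomial.cyclotomic d ℂ).IsRoot x := by
  have hmapeval : ∀ x : ℂ, (aeval x f : ℂ) = aeval x (f.map (Int.castRingHom ℚ)) := by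
    intro x
    rw [show (Int.castRingHom ℚ) = algebraMap ℤ ℚ from rfl, aeval_map_algebraMap]
  constructor
  · rintro ⟨A, hA, hEq⟩ d hd hdN
    have : NeZero (d : ℂ) := ⟨by exact_mod_cast hd.ne'⟩
    obtain ⟨x, hx⟩ : ∃ x : ℂ, IsPrimitiveRoot x d :=
      ⟨Complex.exp (2 * Real.pi * Complex.I / d), Complex.isPrimitiveRoot_exp d hd.ne'⟩
    refine ⟨x, ?_, (isRoot_cyclotomic_iff (R := ℂ)).2 hx⟩
    have hx1 : x ^ N = 1 := by
      obtain ⟨k, rfl⟩ := hdN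
      rw [pow_mul, hx.pow_eq_one, one_pow]
    have := hmapeval x
    rw [hEq] at this
    simp [this, hx1]
  · intro hroots
    set g : Polynomial ℚ := f.map (Int.castRingHom ℚ) with hg
    have hginj := (Int.castRingHom ℚ).injective_int
    have hgdeg : g.natDegree = N := by
      rw [hg, natDegree_map_eq_of_injective hginj, hf]
    have hgne : g ≠ 0 := by
      intro h0
      rw [h0] at hgdeg
      simp at hgdeg
      omega
    -- each cyclotomic divides g
    have hdvd : ∀ d ∈ N.divisors, cyclotomic d ℚ ∣ g := by
      intro d hd
      obtain ⟨hdN, _⟩ := Nat.mem_divisors.1 hd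
      have hdpos : 0 < d := Nat.pos_of_dvd_of_pos hdN hN
      obtain ⟨x, hxf, hxc⟩ := hroots d hdpos hdN
      have : NeZero (d : ℂ) := ⟨by exact_mod_cast hdpos.ne'⟩
      have hprim : IsPrimitiveRoot x d := (isRoot_cyclotomic_iff (R := ℂ)).1 hxc
      have hxg : aeval x g = 0 := by rw [← hmapeval x, hxf]
      rw [cyclotomic_eq_minpoly_rat hprim hdpos]
      exact minpoly.dvd ℚ x hxg
    have hprod : (∏ d ∈ N.divisors, cyclotomic d ℚ) ∣ g := by
      refine Finset.prod_dvd_of_coprime ?_ hdvd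
      intro a ha b hb hab
      exact cyclotomic.isCoprime_rat hab
    rw [prod_cyclotomic_eq_X_pow_sub_one hN ℚ] at hprod
    obtain ⟨q, hq⟩ := hprod
    have hqne : q ≠ 0 := by
      intro h0; rw [h0, mul_zero] at hq; exact hgne hq
    have hC1 : (X ^ N - 1 : Polynomial ℚ) = X ^ N - C 1 := by rw [C_1]
    have hXne : (X ^ N - 1 : Polynomial ℚ) ≠ 0 := by
      rw [hC1]; exact X_pow_sub_C_ne_zero hN 1
    have hqdeg : q.natDegree = 0 := by
      have := natDegree_mul hXne hqne
      rw [← hq, hgdeg, hC1, natDegree_X_pow_sub_C] at this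
      omega
    obtain ⟨A, rfl⟩ := natDegree_eq_zero.1 hqdeg
    refine ⟨A, ?_, by rw [hq, mul_comm]⟩
    intro hA0
    rw [hA0, map_zero] at hqne
    exact hqne rfl
end
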